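/- arXiv:1110.5689 — 2 statements merged into one kernel-verified Lean document; each statement's English description precedes it below -/
import Mathlib

section
/- Let A be a nonzero real symmetric matrix. Every best rank one approximation of A (in Frobenius norm, over all rank one matrices s x yᵀ) is symmetric if and only if λ₁(A) ≠ −λₙ(A). -/
/-!
For unit `x, y` one has `‖A - s x yᵀ‖² = ‖A‖² - (xᵀAy)² + (s - xᵀAy)²`, so the best rank one
approximations are exactly the matrices `f x yᵀ` with `f = xᵀAy` and `f² = σ²`, where
`σ = maxᵢ |λᵢ|`. In eigen-coordinates `a, c` of `x, y` we have `f = ∑ λᵢ aᵢ cᵢ`, and equality in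
Cauchy–Schwarz forces `f a = Λ c` and `f c = Λ a`; hence `c` lives on eigenvalues with `λᵢ² = σ²`.
If `λ₁ ≠ -λₙ`, only one of `±σ` is an eigenvalue, so `x` is a multiple of `y` and the approximation
is symmetric. If `λ₁ = σ = -λₙ` with unit eigenvectors `u, v`, then `x = (u + v)/√2`,
`y = (u - v)/√2` give the best approximation `σ x yᵀ`, which is not symmetric because `x ⊥ y`.
-/

noncomputable section

/-- Frobenius norm of a real matrix. -/
def frob {m k : ℕ} (A : Matrix (Fin m) (Fin k) ℝ) : ℝ :=
  Real.sqrt (∑ i, ∑ j, A i j ^ 2)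

/-- `v` is a unit vector. -/
def uvec {m : ℕ} (v : Fin m → ℝ) : Prop := ∑ i, v i ^ 2 = 1

/-- `B` is a best rank one approximation of `A` in the Frobenius norm:
`B = s x yᵀ` for unit vectors `x, y`, and `B` minimizes the Frobenius distance to `A`
among all such matrices. -/
def IsBestRankOne {m : ℕ} (A B : Matrix (Fin m) (Fin m) ℝ) : Prop :=
  (∃ (s : ℝ) (x y : Fin m → ℝ), uvec x ∧ uvec y ∧ B = s • Matrix.vecMulVec x y) ∧
  ∀ (s : ℝ) (x y : Fin m → ℝ), uvec x → uvec y →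
    frob (A - B) ≤ frob (A - s • Matrix.vecMulVec x y)

open Matrix

section WeightedCauchySchwarz

variable {ι : Type*} [Fintype ι] {lam a c : ι → ℝ} {σ t : ℝ}

lemma sum_sq_sub_le (hσ : ∀ i, |lam i| ≤ σ) (ha : a ⬝ᵥ a = 1) (hc : c ⬝ᵥ c = 1)
    (ht : ∑ i, lam i * (a i * c i) = t) :
    ∑ i, (t * a i - lam i * c i) ^ 2 ≤ σ ^ 2 - t ^ 2 := by
  have hlam : ∀ i, lam i ^ 2 * (c i * c i) ≤ σ ^ 2 * (c i * c i) := fun i =>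
    mul_le_mul_of_nonneg_right (sq_le_sq' (abs_le.mp (hσ i)).1 (abs_le.mp (hσ i)).2)
      (mul_self_nonneg _)
  calc ∑ i, (t * a i - lam i * c i) ^ 2
      = t ^ 2 * (a ⬝ᵥ a) - 2 * t * ∑ i, lam i * (a i * c i) + ∑ i, lam i ^ 2 * (c i * c i) := by
        simp only [dotProduct, Finset.mul_sum, ← Finset.sum_sub_distrib, ← Finset.sum_add_distrib]
        exact Finset.sum_congr rfl fun i _ => by ring
    _ ≤ t ^ 2 * (a ⬝ᵥ a) - 2 * t * ∑ i, lam i * (a i * c i) + ∑ i, σ ^ 2 * (c i * c i) := by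
        linarith [Finset.sum_le_sum fun i (_ : i ∈ Finset.univ) => hlam i]
    _ = σ ^ 2 - t ^ 2 := by
        rw [← Finset.mul_sum, show ∑ i, c i * c i = c ⬝ᵥ c from rfl, ha, hc, ht]
        ring

lemma sq_le_sq_of_sum_mul_eq (hσ : ∀ i, |lam i| ≤ σ) (ha : a ⬝ᵥ a = 1) (hc : c ⬝ᵥ c = 1)
    (ht : ∑ i, lam i * (a i * c i) = t) : t ^ 2 ≤ σ ^ 2 := by
  have := sum_sq_sub_le hσ ha hc ht
  have : 0 ≤ ∑ i, (t * a i - lam i * c i) ^ 2 := Finset.sum_nonneg fun i _ => sq_nonneg _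
  linarith

lemma mul_eq_mul_of_sum_mul_eq (hσ : ∀ i, |lam i| ≤ σ) (ha : a ⬝ᵥ a = 1) (hc : c ⬝ᵥ c = 1)
    (ht : ∑ i, lam i * (a i * c i) = t) (htσ : t ^ 2 = σ ^ 2) (i : ι) :
    t * a i = lam i * c i := by
  have hle := sum_sq_sub_le hσ ha hc ht
  rw [htσ, sub_self] at hle
  have hzero := (Finset.sum_eq_zero_iff_of_nonneg fun j _ => sq_nonneg (t * a j - lam j * c j)).mp
    (hle.antisymm (Finset.sum_nonneg fun j _ => sq_nonneg _)) i (Finset.mem_univ i)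
  exact sub_eq_zero.mp (pow_eq_zero_iff two_ne_zero |>.mp hzero)

end WeightedCauchySchwarz

lemma eq_of_sq_eq_of_iSup_ne_neg_iInf {ι : Type*} [Finite ι] {f : ι → ℝ} {i₀ : ι}
    (hi₀ : ∀ i, |f i| ≤ |f i₀|) (hne : ⨆ i, f i ≠ -⨅ i, f i) {i : ι} (hi : f i ^ 2 = f i₀ ^ 2) :
    f i = f i₀ := by
  have : Nonempty ι := ⟨i₀⟩
  refine (sq_eq_sq_iff_eq_or_eq_neg.mp hi).resolve_right fun hneg => hne ?_
  have hsup : ⨆ j, f j ≤ |f i₀| := ciSup_le fun j => (le_abs_self _).trans (hi₀ j)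
  have hinf : -|f i₀| ≤ ⨅ j, f j := le_ciInf fun j => (neg_le_neg (hi₀ j)).trans (neg_abs_le _)
  have := le_ciSup (Finite.bddAbove_range f) i
  have := le_ciSup (Finite.bddAbove_range f) i₀
  have := ciInf_le (Finite.bddBelow_range f) i
  have := ciInf_le (Finite.bddBelow_range f) i₀
  rcases abs_cases (f i₀) with ⟨h, _⟩ | ⟨h, _⟩ <;> linarith

namespace Matrix.IsHermitian

variable {ι : Type*} [Fintype ι] [DecidableEq ι] {A : Matrix ι ι ℝ} (hA : A.IsHermitian)

def eigenCoord (x : ι → ℝ) : ι → ℝ := star (hA.eigenvectorUnitary : Matrix ι ι ℝ) *ᵥ x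

lemma eigenvectorUnitary_mulVec_eigenCoord (x : ι → ℝ) :
    (hA.eigenvectorUnitary : Matrix ι ι ℝ) *ᵥ hA.eigenCoord x = x := by
  rw [eigenCoord, mulVec_mulVec, Unitary.mul_star_self_of_mem (SetLike.coe_mem _), one_mulVec]

lemma eigenCoord_injective : Function.Injective hA.eigenCoord := fun x y h => by
  rw [← hA.eigenvectorUnitary_mulVec_eigenCoord x, h, eigenvectorUnitary_mulVec_eigenCoord]

lemma eigenCoord_smul (c : ℝ) (x : ι → ℝ) : hA.eigenCoord (c • x) = c • hA.eigenCoord x :=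
  mulVec_smul _ c x

lemma dotProduct_eigenvectorUnitary_mulVec (x w : ι → ℝ) :
    x ⬝ᵥ (hA.eigenvectorUnitary : Matrix ι ι ℝ) *ᵥ w = hA.eigenCoord x ⬝ᵥ w := by
  rw [dotProduct_mulVec, eigenCoord, star_eq_conjTranspose, conjTranspose_eq_transpose_of_trivial,
    ← vecMul_transpose, transpose_transpose]

lemma eigenCoord_dotProduct_eigenCoord (x y : ι → ℝ) :
    hA.eigenCoord x ⬝ᵥ hA.eigenCoord y = x ⬝ᵥ y := by
  rw [← hA.dotProduct_eigenvectorUnitary_mulVec, eigenvectorUnitary_mulVec_eigenCoord]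

lemma eigenCoord_eigenvectorBasis (i : ι) :
    hA.eigenCoord ⇑(hA.eigenvectorBasis i) = Pi.single i 1 :=
  hA.star_eigenvectorUnitary_mulVec i

lemma eigenvectorBasis_dotProduct (i j : ι) :
    ⇑(hA.eigenvectorBasis i) ⬝ᵥ ⇑(hA.eigenvectorBasis j) = if i = j then 1 else 0 := by
  rw [← hA.eigenCoord_dotProduct_eigenCoord, eigenCoord_eigenvectorBasis,
    eigenCoord_eigenvectorBasis, single_one_dotProduct, Pi.single_apply]

lemma eigenvectorBasis_dotProduct_self (i : ι) :
    ⇑(hA.eigenvectorBasis i) ⬝ᵥ ⇑(hA.eigenvectorBasis i) = 1 := by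
  rw [eigenvectorBasis_dotProduct, if_pos rfl]

lemma dotProduct_mulVec_eq_sum (x y : ι → ℝ) :
    x ⬝ᵥ A *ᵥ y = ∑ i, hA.eigenvalues i * (hA.eigenCoord x i * hA.eigenCoord y i) := by
  conv_lhs => rw [hA.spectral_theorem]
  rw [Unitary.conjStarAlgAut_apply, ← mulVec_mulVec, ← mulVec_mulVec,
    dotProduct_eigenvectorUnitary_mulVec]
  refine Finset.sum_congr rfl fun i _ => ?_
  rw [mulVec_diagonal]
  change hA.eigenCoord x i * (hA.eigenvalues i * hA.eigenCoord y i) = _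
  ring

variable {σ : ℝ} {x y : ι → ℝ}

lemma sq_dotProduct_mulVec_le (hσ : ∀ i, |hA.eigenvalues i| ≤ σ) (hx : x ⬝ᵥ x = 1)
    (hy : y ⬝ᵥ y = 1) : (x ⬝ᵥ A *ᵥ y) ^ 2 ≤ σ ^ 2 :=
  sq_le_sq_of_sum_mul_eq hσ (by rwa [eigenCoord_dotProduct_eigenCoord])
    (by rwa [eigenCoord_dotProduct_eigenCoord]) (hA.dotProduct_mulVec_eq_sum x y).symm

lemma mul_eigenCoord_eq_of_sq_eq (hσ : ∀ i, |hA.eigenvalues i| ≤ σ) (hx : x ⬝ᵥ x = 1)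
    (hy : y ⬝ᵥ y = 1) (h : (x ⬝ᵥ A *ᵥ y) ^ 2 = σ ^ 2) (i : ι) :
    (x ⬝ᵥ A *ᵥ y) * hA.eigenCoord x i = hA.eigenvalues i * hA.eigenCoord y i :=
  mul_eq_mul_of_sum_mul_eq hσ (by rwa [eigenCoord_dotProduct_eigenCoord])
    (by rwa [eigenCoord_dotProduct_eigenCoord]) (hA.dotProduct_mulVec_eq_sum x y).symm h i

end Matrix.IsHermitian

section RankOne

variable {ι : Type*} [Fintype ι]

lemma not_isSymm_smul_vecMulVec {s : ℝ} {x y : ι → ℝ} (hs : s ≠ 0) (hx : x ⬝ᵥ x ≠ 0)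
    (hy : y ≠ 0) (hxy : x ⬝ᵥ y = 0) : ¬ (s • vecMulVec x y).IsSymm := by
  intro hsymm
  have h := congrArg (x ᵥ* ·) hsymm
  simp only [transpose_smul, transpose_vecMulVec, vecMul_smul, vecMul_vecMulVec, hxy,
    zero_smul, smul_zero] at h
  exact hy (by simpa [hs, hx] using h.symm)

lemma exists_orthonormal_mulVec_eq_smul {A : Matrix ι ι ℝ} {u v : ι → ℝ} {σ : ℝ}
    (hu : u ⬝ᵥ u = 1) (hv : v ⬝ᵥ v = 1) (huv : u ⬝ᵥ v = 0) (hAu : A *ᵥ u = σ • u)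
    (hAv : A *ᵥ v = -σ • v) :
    ∃ x y : ι → ℝ, x ⬝ᵥ x = 1 ∧ y ⬝ᵥ y = 1 ∧ x ⬝ᵥ y = 0 ∧ A *ᵥ y = σ • x := by
  set c : ℝ := (√2)⁻¹
  have hc : c * c = 1 / 2 := by
    rw [← mul_inv, Real.mul_self_sqrt zero_le_two, one_div]
  have hvu : v ⬝ᵥ u = 0 := by rw [dotProduct_comm, huv]
  refine ⟨c • (u + v), c • (u - v), ?_, ?_, ?_, ?_⟩
  · simp only [smul_dotProduct, dotProduct_smul, add_dotProduct, dotProduct_add, hu, hv, huv, hvu,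
      smul_eq_mul]
    linear_combination 2 * hc
  · simp only [smul_dotProduct, dotProduct_smul, sub_dotProduct, dotProduct_sub, hu, hv, huv, hvu,
      smul_eq_mul]
    linear_combination 2 * hc
  · simp only [smul_dotProduct, dotProduct_smul, add_dotProduct, dotProduct_sub, hu, hv, huv, hvu,
      smul_eq_mul]
    ring
  · rw [mulVec_smul, mulVec_sub, hAu, hAv]
    module

end RankOne

variable {m k : ℕ}

lemma uvec_iff_dotProduct_self (x : Fin m → ℝ) : uvec x ↔ x ⬝ᵥ x = 1 := by
  simp only [uvec, dotProduct, sq]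

lemma frob_sq (M : Matrix (Fin m) (Fin k) ℝ) : frob M ^ 2 = ∑ i, ∑ j, M i j ^ 2 :=
  Real.sq_sqrt (by positivity)

lemma frob_sub_smul_vecMulVec_sq (A : Matrix (Fin m) (Fin k) ℝ) (s : ℝ) {x : Fin m → ℝ}
    {y : Fin k → ℝ} (hx : uvec x) (hy : uvec y) :
    frob (A - s • vecMulVec x y) ^ 2 = frob A ^ 2 - (x ⬝ᵥ A *ᵥ y) ^ 2 + (s - x ⬝ᵥ A *ᵥ y) ^ 2 := by
  have hentry : ∀ i j, (A - s • vecMulVec x y) i j ^ 2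
      = A i j ^ 2 - 2 * s * (x i * (A i j * y j)) + s ^ 2 * (x i ^ 2 * y j ^ 2) := fun i j => by
    simp only [Matrix.sub_apply, Matrix.smul_apply, vecMulVec_apply, smul_eq_mul]
    ring
  have hbilin : ∑ i, x i * ∑ j, A i j * y j = x ⬝ᵥ A *ᵥ y := rfl
  simp only [frob_sq, hentry, Finset.sum_add_distrib, Finset.sum_sub_distrib, ← Finset.mul_sum,
    ← Finset.sum_mul, hbilin]
  rw [show ∑ i, x i ^ 2 = 1 from hx, show ∑ j, y j ^ 2 = 1 from hy]
  ring

lemma isBestRankOne_iff_of_isGreatest {A B : Matrix (Fin m) (Fin m) ℝ} {σ2 : ℝ}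
    (h : IsGreatest {t | ∃ x y, uvec x ∧ uvec y ∧ (x ⬝ᵥ A *ᵥ y) ^ 2 = t} σ2) :
    IsBestRankOne A B ↔
      ∃ x y, uvec x ∧ uvec y ∧ (x ⬝ᵥ A *ᵥ y) ^ 2 = σ2 ∧ B = (x ⬝ᵥ A *ᵥ y) • vecMulVec x y := by
  have hdist : ∀ s x y, uvec x → uvec y →
      (frob (A - B) ≤ frob (A - s • vecMulVec x y) ↔
        frob (A - B) ^ 2 ≤ frob A ^ 2 - (x ⬝ᵥ A *ᵥ y) ^ 2 + (s - x ⬝ᵥ A *ᵥ y) ^ 2) :=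
    fun s x y hx hy => by
      rw [← frob_sub_smul_vecMulVec_sq A s hx hy]
      exact (sq_le_sq₀ (Real.sqrt_nonneg _) (Real.sqrt_nonneg _)).symm
  obtain ⟨⟨x₀, y₀, hx₀, hy₀, hσ2⟩, hle⟩ := h
  constructor
  · rintro ⟨⟨s, x, y, hx, hy, rfl⟩, hmin⟩
    have hopt := (hdist _ x₀ y₀ hx₀ hy₀).mp (hmin (x₀ ⬝ᵥ A *ᵥ y₀) x₀ y₀ hx₀ hy₀)
    rw [frob_sub_smul_vecMulVec_sq A s hx hy, hσ2, sub_self] at hopt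
    have hf := hle ⟨x, y, hx, hy, rfl⟩
    -- with `f = x ⬝ᵥ A *ᵥ y`, `hopt` says `(s - f)² ≤ f² - σ2`, while `f² ≤ σ2`
    have hs : (s - x ⬝ᵥ A *ᵥ y) ^ 2 = 0 := by nlinarith [sq_nonneg (s - x ⬝ᵥ A *ᵥ y)]
    refine ⟨x, y, hx, hy, by nlinarith [sq_nonneg (s - x ⬝ᵥ A *ᵥ y)], ?_⟩
    rw [sub_eq_zero.mp (pow_eq_zero_iff two_ne_zero |>.mp hs)]
  · rintro ⟨x, y, hx, hy, hf, rfl⟩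
    refine ⟨⟨_, x, y, hx, hy, rfl⟩, fun s x' y' hx' hy' => (hdist s x' y' hx' hy').mpr ?_⟩
    rw [frob_sub_smul_vecMulVec_sq A _ hx hy, sub_self, hf]
    nlinarith [hle ⟨x', y', hx', hy', rfl⟩, sq_nonneg (s - x' ⬝ᵥ A *ᵥ y')]

namespace Matrix.IsHermitian

variable {A : Matrix (Fin m) (Fin m) ℝ} (hA : A.IsHermitian)

lemma uvec_eigenvectorBasis (i : Fin m) : uvec ⇑(hA.eigenvectorBasis i) := by
  rw [uvec_iff_dotProduct_self, eigenvectorBasis_dotProduct_self]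

lemma isGreatest_sq_dotProduct_mulVec {i₀ : Fin m}
    (hi₀ : ∀ i, |hA.eigenvalues i| ≤ |hA.eigenvalues i₀|) :
    IsGreatest {t | ∃ x y, uvec x ∧ uvec y ∧ (x ⬝ᵥ A *ᵥ y) ^ 2 = t} (hA.eigenvalues i₀ ^ 2) := by
  refine ⟨⟨_, _, hA.uvec_eigenvectorBasis i₀, hA.uvec_eigenvectorBasis i₀, ?_⟩, ?_⟩
  · rw [mulVec_eigenvectorBasis, dotProduct_smul, eigenvectorBasis_dotProduct_self, smul_eq_mul,
      mul_one]
  · rintro _ ⟨x, y, hx, hy, rfl⟩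
    rw [← sq_abs (hA.eigenvalues i₀)]
    exact hA.sq_dotProduct_mulVec_le hi₀ ((uvec_iff_dotProduct_self x).mp hx)
      ((uvec_iff_dotProduct_self y).mp hy)

lemma isSymm_of_isBestRankOne {B : Matrix (Fin m) (Fin m) ℝ} {i₀ : Fin m}
    (hi₀ : ∀ i, |hA.eigenvalues i| ≤ |hA.eigenvalues i₀|)
    (hsign : ∀ i, hA.eigenvalues i ^ 2 = hA.eigenvalues i₀ ^ 2 →
      hA.eigenvalues i = hA.eigenvalues i₀)
    (hB : IsBestRankOne A B) : B.IsSymm := by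
  obtain ⟨x, y, hx, hy, hf, rfl⟩ :=
    (isBestRankOne_iff_of_isGreatest (hA.isGreatest_sq_dotProduct_mulVec hi₀)).mp hB
  rw [uvec_iff_dotProduct_self] at hx hy
  set f := x ⬝ᵥ A *ᵥ y
  have hf' : f ^ 2 = |hA.eigenvalues i₀| ^ 2 := by rw [sq_abs, hf]
  have hswap : y ⬝ᵥ A *ᵥ x = f := by
    simp only [f, hA.dotProduct_mulVec_eq_sum, mul_comm (hA.eigenCoord y _)]
  have hxy := hA.mul_eigenCoord_eq_of_sq_eq hi₀ hx hy hf'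
  have hyx := hA.mul_eigenCoord_eq_of_sq_eq hi₀ hy hx (hswap ▸ hf')
  rw [hswap] at hyx
  have hcoord : f • hA.eigenCoord x = hA.eigenvalues i₀ • hA.eigenCoord y := by
    funext i
    rw [Pi.smul_apply, Pi.smul_apply, smul_eq_mul, smul_eq_mul, hxy i]
    by_cases hci : hA.eigenCoord y i = 0
    · rw [hci, mul_zero, mul_zero]
    · have hsq : hA.eigenvalues i ^ 2 = hA.eigenvalues i₀ ^ 2 := by
        rw [← hf]
        refine mul_right_cancel₀ hci ?_
        linear_combination (-hA.eigenvalues i) * hxy i - f * hyx i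
      rw [hsign i hsq]
  have hfx : f • x = hA.eigenvalues i₀ • y :=
    hA.eigenCoord_injective (by rw [eigenCoord_smul, eigenCoord_smul, hcoord])
  rw [← smul_vecMulVec, hfx, smul_vecMulVec]
  exact IsSymm.smul (transpose_vecMulVec y y) _

lemma exists_isBestRankOne_not_isSymm [NeZero m] (hA0 : A ≠ 0)
    (heq : ⨆ i, hA.eigenvalues i = -⨅ i, hA.eigenvalues i) :
    ∃ B, IsBestRankOne A B ∧ ¬ B.IsSymm := by
  obtain ⟨imax, hmax⟩ := exists_eq_ciSup_of_finite (f := hA.eigenvalues)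
  obtain ⟨imin, hmin⟩ := exists_eq_ciInf_of_finite (f := hA.eigenvalues)
  set σ := hA.eigenvalues imax
  have hbound : ∀ i, |hA.eigenvalues i| ≤ σ := fun i => abs_le.mpr
    ⟨by linarith [ciInf_le (Finite.bddBelow_range hA.eigenvalues) i],
      hmax ▸ le_ciSup (Finite.bddAbove_range hA.eigenvalues) i⟩
  have hσ : σ ≠ 0 := fun hσ0 => hA0 <| hA.eigenvalues_eq_zero_iff.mp <|
    funext fun i => abs_nonpos_iff.mp (hσ0 ▸ hbound i)
  have hneg : hA.eigenvalues imin = -σ := by rw [hmin, hmax, heq, neg_neg]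
  have hne : imax ≠ imin := fun h => hσ (by linarith [congrArg hA.eigenvalues h])
  obtain ⟨x, y, hx, hy, hxy, hAy⟩ := exists_orthonormal_mulVec_eq_smul
    (hA.eigenvectorBasis_dotProduct_self imax) (hA.eigenvectorBasis_dotProduct_self imin)
    ((hA.eigenvectorBasis_dotProduct imax imin).trans (if_neg hne))
    (hA.mulVec_eigenvectorBasis imax) (by rw [hA.mulVec_eigenvectorBasis imin, hneg])
  have hf : x ⬝ᵥ A *ᵥ y = σ := by rw [hAy, dotProduct_smul, hx, smul_eq_mul, mul_one]
  have hgreatest := hA.isGreatest_sq_dotProduct_mulVec fun i => (hbound i).trans (le_abs_self σ)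
  refine ⟨σ • vecMulVec x y, (isBestRankOne_iff_of_isGreatest hgreatest).mpr
    ⟨x, y, (uvec_iff_dotProduct_self x).mpr hx, (uvec_iff_dotProduct_self y).mpr hy,
      by rw [hf], by rw [hf]⟩, not_isSymm_smul_vecMulVec hσ (by rw [hx]; exact one_ne_zero) ?_ hxy⟩
  rintro rfl
  simp at hy

end Matrix.IsHermitian

/-- For a nonzero real symmetric matrix `A`, every best rank one approximation of `A`
is symmetric if and only if `λ₁(A) ≠ -λₙ(A)`. -/
theorem stmt2 {n : ℕ} (A : Matrix (Fin (n + 1)) (Fin (n + 1)) ℝ) (hA : A.IsHermitian)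
    (hA0 : A ≠ 0) :
    (∀ B, IsBestRankOne A B → B.IsSymm) ↔
      (⨆ i, hA.eigenvalues i) ≠ -(⨅ i, hA.eigenvalues i) := by
  refine ⟨fun hsymm heq => ?_, fun hne B hB => ?_⟩
  · obtain ⟨B, hB, hBs⟩ := hA.exists_isBestRankOne_not_isSymm hA0 heq
    exact hBs (hsymm B hB)
  · obtain ⟨i₀, hi₀⟩ := Finite.exists_max fun i => |hA.eigenvalues i|
    exact hA.isSymm_of_isBestRankOne hi₀
      (fun i hi => eq_of_sq_eq_of_iSup_ne_neg_iInf hi₀ hne hi) hB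
end
end

section
/- A rank one tensor 𝒜 ∈ ℝ^{n₁×…×n_d} is a best rank one approximation of a nonzero tensor T if and only if ⟨T, 𝒜⟩ = ‖T‖²_{∞,2} = ‖𝒜‖². -/
/-!
Write `t x := ⟨T, x₁ ⊗ ⋯ ⊗ x_d⟩`. Since `x₁ ⊗ ⋯ ⊗ x_d` has norm one for unit vectors,
`‖T - s • x₁ ⊗ ⋯ ⊗ x_d‖² = ‖T‖² - (t x)² + (s - t x)²`. Hence `c • x₀₁ ⊗ ⋯ ⊗ x₀_d` is a best
rank one approximation iff `c = t x₀` and `|t x₀|` is the largest value of `|t|`, i.e. the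
spectral norm of `T`.
-/

noncomputable section

/-- The decomposable tensor `x₁ ⊗ ⋯ ⊗ x_d`, as a multi-indexed array. -/
def dtens {ι : Type*} [Fintype ι] {n : ι → ℕ} (x : ∀ j, Fin (n j) → ℝ) :
    (∀ j, Fin (n j)) → ℝ :=
  fun idx => ∏ j, x j (idx j)

/-- Entrywise inner product of tensors. -/
def tinner {ι : Type*} [Fintype ι] [DecidableEq ι] {n : ι → ℕ}
    (S T : (∀ j, Fin (n j)) → ℝ) : ℝ :=
  ∑ idx, S idx * T idx

/-- Hilbert–Schmidt norm of a tensor. -/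
def hsNorm {ι : Type*} [Fintype ι] [DecidableEq ι] {n : ι → ℕ}
    (T : (∀ j, Fin (n j)) → ℝ) : ℝ :=
  Real.sqrt (∑ idx, T idx ^ 2)

/-- `v` is a unit vector in `ℝ^m`. -/
def isUnitVec {m : ℕ} (v : Fin m → ℝ) : Prop := ∑ i, v i ^ 2 = 1

/-- The spectral (`(∞,2)`-Schatten) norm of a tensor: the supremum of
`|⟨T, x₁ ⊗ ⋯ ⊗ x_d⟩|` over unit vectors `x_j`. -/
def specNorm {ι : Type*} [Fintype ι] [DecidableEq ι] {n : ι → ℕ}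
    (T : (∀ j, Fin (n j)) → ℝ) : ℝ :=
  sSup {r | ∃ x : ∀ j, Fin (n j) → ℝ, (∀ j, isUnitVec (x j)) ∧ r = |tinner T (dtens x)|}

section RankOne

variable {ι : Type*} [Fintype ι] [DecidableEq ι] {n : ι → ℕ}

lemma hsNorm_nonneg (U : (∀ j, Fin (n j)) → ℝ) : 0 ≤ hsNorm U :=
  Real.sqrt_nonneg _

lemma hsNorm_sq (U : (∀ j, Fin (n j)) → ℝ) : hsNorm U ^ 2 = ∑ idx, U idx ^ 2 :=
  Real.sq_sqrt (Finset.sum_nonneg fun _ _ => sq_nonneg _)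

lemma tinner_smul_right (T B : (∀ j, Fin (n j)) → ℝ) (s : ℝ) :
    tinner T (s • B) = s * tinner T B := by
  simp only [tinner, Pi.smul_apply, smul_eq_mul, Finset.mul_sum]
  exact Finset.sum_congr rfl fun _ _ => by ring

lemma sum_sq_dtens {x : ∀ j, Fin (n j) → ℝ} (hx : ∀ j, isUnitVec (x j)) :
    ∑ idx, dtens x idx ^ 2 = 1 := by
  simp only [dtens, ← Finset.prod_pow]
  rw [← Fintype.prod_sum fun j i => x j i ^ 2]
  exact Finset.prod_eq_one fun j _ => hx j

lemma hsNorm_smul_dtens_sq (c : ℝ) {x : ∀ j, Fin (n j) → ℝ} (hx : ∀ j, isUnitVec (x j)) :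
    hsNorm (c • dtens x) ^ 2 = c ^ 2 := by
  simp only [hsNorm_sq, Pi.smul_apply, smul_eq_mul, mul_pow, ← Finset.mul_sum,
    sum_sq_dtens hx, mul_one]

lemma hsNorm_sub_smul_dtens_sq (T : (∀ j, Fin (n j)) → ℝ) (s : ℝ)
    {x : ∀ j, Fin (n j) → ℝ} (hx : ∀ j, isUnitVec (x j)) :
    hsNorm (T - s • dtens x) ^ 2 =
      hsNorm T ^ 2 - tinner T (dtens x) ^ 2 + (s - tinner T (dtens x)) ^ 2 := by
  have hexpand : ∑ idx, (T - s • dtens x) idx ^ 2 =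
      ∑ idx, (T idx ^ 2 - 2 * s * (T idx * dtens x idx) + s ^ 2 * dtens x idx ^ 2) :=
    Finset.sum_congr rfl fun _ _ => by
      simp only [Pi.sub_apply, Pi.smul_apply, smul_eq_mul]; ring
  rw [hsNorm_sq, hsNorm_sq, hexpand, Finset.sum_add_distrib, Finset.sum_sub_distrib,
    ← Finset.mul_sum, ← Finset.mul_sum, sum_sq_dtens hx, tinner]
  ring

lemma abs_tinner_dtens_le_hsNorm (T : (∀ j, Fin (n j)) → ℝ)
    {x : ∀ j, Fin (n j) → ℝ} (hx : ∀ j, isUnitVec (x j)) :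
    |tinner T (dtens x)| ≤ hsNorm T := by
  refine Real.abs_le_sqrt ?_
  calc tinner T (dtens x) ^ 2 ≤ (∑ idx, T idx ^ 2) * ∑ idx, dtens x idx ^ 2 :=
        Finset.sum_mul_sq_le_sq_mul_sq _ _ _
    _ = ∑ idx, T idx ^ 2 := by rw [sum_sq_dtens hx, mul_one]

lemma abs_tinner_dtens_le_specNorm (T : (∀ j, Fin (n j)) → ℝ)
    {x : ∀ j, Fin (n j) → ℝ} (hx : ∀ j, isUnitVec (x j)) :
    |tinner T (dtens x)| ≤ specNorm T := by
  refine le_csSup ⟨hsNorm T, ?_⟩ ⟨x, hx, rfl⟩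
  rintro r ⟨y, hy, rfl⟩
  exact abs_tinner_dtens_le_hsNorm T hy

lemma specNorm_eq_abs_tinner_dtens_iff (T : (∀ j, Fin (n j)) → ℝ)
    {x₀ : ∀ j, Fin (n j) → ℝ} (hx₀ : ∀ j, isUnitVec (x₀ j)) :
    specNorm T = |tinner T (dtens x₀)| ↔
      ∀ x : ∀ j, Fin (n j) → ℝ, (∀ j, isUnitVec (x j)) →
        |tinner T (dtens x)| ≤ |tinner T (dtens x₀)| := by
  refine ⟨fun h x hx => h ▸ abs_tinner_dtens_le_specNorm T hx, fun h => ?_⟩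
  refine IsGreatest.csSup_eq ⟨⟨x₀, hx₀, rfl⟩, ?_⟩
  rintro r ⟨x, hx, rfl⟩
  exact h x hx

lemma isBestRankOne_iff (T : (∀ j, Fin (n j)) → ℝ) (c : ℝ)
    {x₀ : ∀ j, Fin (n j) → ℝ} (hx₀ : ∀ j, isUnitVec (x₀ j)) :
    (∀ (s : ℝ) (x : ∀ j, Fin (n j) → ℝ), (∀ j, isUnitVec (x j)) →
        hsNorm (T - c • dtens x₀) ≤ hsNorm (T - s • dtens x)) ↔
      tinner T (dtens x₀) = c ∧ ∀ x : ∀ j, Fin (n j) → ℝ, (∀ j, isUnitVec (x j)) →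
        |tinner T (dtens x)| ≤ |c| := by
  have hsq : ∀ (s : ℝ) (x : ∀ j, Fin (n j) → ℝ), (∀ j, isUnitVec (x j)) →
      (hsNorm (T - c • dtens x₀) ≤ hsNorm (T - s • dtens x) ↔
        (c - tinner T (dtens x₀)) ^ 2 - tinner T (dtens x₀) ^ 2 ≤
          (s - tinner T (dtens x)) ^ 2 - tinner T (dtens x) ^ 2) := by
    intro s x hx
    rw [← pow_le_pow_iff_left₀ (hsNorm_nonneg _) (hsNorm_nonneg _) two_ne_zero]
    rw [hsNorm_sub_smul_dtens_sq T c hx₀, hsNorm_sub_smul_dtens_sq T s hx]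
    constructor <;> intro h <;> linarith
  constructor
  · intro h
    replace h := fun s x hx => (hsq s x hx).mp (h s x hx)
    have hc : tinner T (dtens x₀) = c := by
      nlinarith [h (tinner T (dtens x₀)) x₀ hx₀]
    refine ⟨hc, fun x hx => sq_le_sq.mp ?_⟩
    have hx' := h (tinner T (dtens x)) x hx
    rw [hc] at hx'
    nlinarith
  · rintro ⟨hc, hmax⟩ s x hx
    rw [hsq s x hx, hc]
    nlinarith [sq_le_sq.mpr (hmax x hx), sq_nonneg (s - tinner T (dtens x))]

end RankOne

theorem stmt6_general {d : ℕ} {n : Fin d → ℕ}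
    (T : (∀ j, Fin (n j)) → ℝ)
    (A : (∀ j, Fin (n j)) → ℝ)
    (hA : ∃ (c : ℝ) (x : ∀ j, Fin (n j) → ℝ), c ≠ 0 ∧ (∀ j, isUnitVec (x j)) ∧
      A = c • dtens x) :
    (∀ (s : ℝ) (x : ∀ j, Fin (n j) → ℝ), (∀ j, isUnitVec (x j)) →
        hsNorm (T - A) ≤ hsNorm (T - s • dtens x)) ↔
      (tinner T A = specNorm T ^ 2 ∧ specNorm T ^ 2 = hsNorm A ^ 2) := by
  obtain ⟨c, x₀, hc, hx₀, rfl⟩ := hA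
  rw [isBestRankOne_iff T c hx₀, tinner_smul_right, hsNorm_smul_dtens_sq c hx₀]
  constructor
  · rintro ⟨rfl, hmax⟩
    have h := (specNorm_eq_abs_tinner_dtens_iff T hx₀).mpr hmax
    rw [h, sq_abs]
    exact ⟨by ring, rfl⟩
  · rintro ⟨hinner, hnorm⟩
    have ht : tinner T (dtens x₀) = c := mul_left_cancel₀ hc (by rw [hinner, hnorm]; ring)
    have hσ : 0 ≤ specNorm T := (abs_nonneg _).trans (abs_tinner_dtens_le_specNorm T hx₀)
    have habs : specNorm T = |c| := by
      rw [← abs_of_nonneg hσ]; exact (sq_eq_sq_iff_abs_eq_abs _ _).mp hnorm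
    refine ⟨ht, fun x hx => habs ▸ abs_tinner_dtens_le_specNorm T hx⟩

/-- A rank one tensor `𝒜` is a best rank one approximation of the nonzero tensor `T`
iff `⟨T, 𝒜⟩ = ‖T‖²_{∞,2} = ‖𝒜‖²`. -/
theorem stmt6 {d : ℕ} {n : Fin d → ℕ} (hn : ∀ j, 0 < n j)
    (T : (∀ j, Fin (n j)) → ℝ) (hT : T ≠ 0)
    (A : (∀ j, Fin (n j)) → ℝ)
    (hA : ∃ (c : ℝ) (x : ∀ j, Fin (n j) → ℝ), c ≠ 0 ∧ (∀ j, isUnitVec (x j)) ∧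
      A = c • dtens x) :
    (∀ (s : ℝ) (x : ∀ j, Fin (n j) → ℝ), (∀ j, isUnitVec (x j)) →
        hsNorm (T - A) ≤ hsNorm (T - s • dtens x)) ↔
      (tinner T A = specNorm T ^ 2 ∧ specNorm T ^ 2 = hsNorm A ^ 2) :=
  stmt6_general T A hA
end
end
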